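/- Let a_{12}, a_{23}, …, a_{n−1,n} be the superdiagonal weights of a line network, i.i.d. uniform on [0,1]. Then the minimal Frobenius norm δ(n) of a structured perturbation rendering the line network (observed from node 1) unobservable satisfies δ(n) = min{a_{12}, …, a_{n−1,n}} and 𝔼[δ(n)] = 1/n. -/

import Mathlib

open MeasureTheory ProbabilityTheory

/-!
A tridiagonal matrix whose superdiagonal entries are all nonzero has no eigenvector vanishing at
the first node: read row by row, the eigen-equations force each next coordinate to vanish. A
tridiagonal perturbation of Frobenius norm below `min aᵢ` cannot cancel any superdiagonal entry,
whereas cancelling `aᵢ` (at cost `aᵢ`) makes the matrix block lower triangular, and an eigenvector of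
the lower-right block, extended by zero, vanishes at the first node.

For the expectation, independence gives `P (min aᵢ > t) = (1 - t) ^ (n - 1)` on `[0, 1]`, and the
layer-cake formula turns this into `∫₀¹ (1 - t) ^ (n - 1) dt = 1 / n`.
-/

noncomputable def frobNorm {n : ℕ} (M : Matrix (Fin n) (Fin n) ℝ) : ℝ :=
  Real.sqrt (∑ i, ∑ j, (M i j) ^ 2)

def triPattern {n : ℕ} (M : Matrix (Fin n) (Fin n) ℝ) : Prop :=
  ∀ i j : Fin n, ((i : ℕ) + 1 < j ∨ (j : ℕ) + 1 < i) → M i j = 0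

open Set Matrix

theorem abs_apply_le_frobNorm {n : ℕ} (M : Matrix (Fin n) (Fin n) ℝ) (i j : Fin n) :
    |M i j| ≤ frobNorm M := by
  rw [frobNorm, ← Real.sqrt_sq_eq_abs]
  gcongr
  calc M i j ^ 2 ≤ ∑ j', M i j' ^ 2 :=
        Finset.single_le_sum (fun _ _ => sq_nonneg _) (Finset.mem_univ j)
    _ ≤ ∑ i', ∑ j', M i' j' ^ 2 :=
        Finset.single_le_sum (f := fun i' => ∑ j', M i' j' ^ 2)
          (fun _ _ => by positivity) (Finset.mem_univ i)

theorem frobNorm_single {n : ℕ} (i j : Fin n) (c : ℝ) : frobNorm (single i j c) = |c| := by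
  simp [frobNorm, single_apply, ite_pow, ite_and, Real.sqrt_sq_eq_abs]

theorem triPattern_single {n : ℕ} {i j : Fin n} (hij : (j : ℕ) = i + 1) (c : ℝ) :
    triPattern (single i j c) := by
  intro k l hkl
  apply single_apply_of_ne
  rintro ⟨rfl, rfl⟩
  omega

theorem Matrix.eq_zero_of_mulVec_eq_smul_of_superdiag_ne_zero {R : Type*} [CommRing R]
    [NoZeroDivisors R] {n : ℕ} (M : Matrix (Fin n) (Fin n) R)
    (hM : ∀ i j : Fin n, (i : ℕ) + 1 < j → M i j = 0)
    (hsup : ∀ i j : Fin n, (j : ℕ) = i + 1 → M i j ≠ 0)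
    {μ : R} {x : Fin n → R} (hn : 0 < n) (hx₀ : x ⟨0, hn⟩ = 0) (hx : M *ᵥ x = μ • x) :
    x = 0 := by
  suffices h : ∀ k : ℕ, ∀ j : Fin n, (j : ℕ) ≤ k → x j = 0 from funext fun j => h j j le_rfl
  intro k
  induction k with
  | zero => exact fun j hj => (Fin.ext (Nat.le_zero.1 hj) : j = ⟨0, hn⟩) ▸ hx₀
  | succ k ih =>
    intro j hj
    rcases le_or_gt (j : ℕ) k with hjk | hkj
    · exact ih j hjk
    let i : Fin n := ⟨k, by omega⟩
    have hij : (j : ℕ) = i + 1 := by simp [i]; omega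
    have hrow : M i j * x j = μ * x i := by
      rw [← smul_eq_mul μ, ← Pi.smul_apply μ x i, ← hx, mulVec, dotProduct,
        Finset.sum_eq_single j]
      · intro l _ hl
        rcases Nat.lt_or_ge k l with hkl | hlk
        · rw [hM i l (by simp [i]; omega), zero_mul]
        · rw [ih l hlk, mul_zero]
      · simp
    rw [ih i le_rfl, mul_zero] at hrow
    exact (mul_eq_zero.1 hrow).resolve_left (hsup i j hij)

theorem Matrix.exists_mulVec_eq_smul_of_apply_eq_zero {K ι : Type*} [Field K] [IsAlgClosed K]
    [Fintype ι] [DecidableEq ι] (M : Matrix ι ι K) {s : Set ι} (hs : s.Nonempty)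
    (hM : ∀ i ∉ s, ∀ j ∈ s, M i j = 0) :
    ∃ (μ : K) (x : ι → K), x ≠ 0 ∧ (∀ i ∉ s, x i = 0) ∧ M *ᵥ x = μ • x := by
  let W : Submodule K (ι → K) := Submodule.pi sᶜ fun _ => ⊥
  have hW : ∀ x ∈ W, M.mulVecLin x ∈ W := by
    simp only [W, Submodule.mem_pi, mem_compl_iff, Submodule.mem_bot]
    intro x hx i hi
    refine Finset.sum_eq_zero fun j _ => ?_
    by_cases hj : j ∈ s
    · simp [hM i hi j hj]
    · simp [hx j hj]
  obtain ⟨j, hj⟩ := hs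
  have : Nontrivial W := by
    refine (Submodule.nontrivial_iff_ne_bot).2 fun hbot => ?_
    have hsingle : Pi.single j 1 ∈ W := by
      simp only [W, Submodule.mem_pi, mem_compl_iff, Submodule.mem_bot]
      intro i hi
      exact Pi.single_eq_of_ne (by rintro rfl; exact hi hj) _
    rw [hbot, Submodule.mem_bot] at hsingle
    simpa using congrFun hsingle j
  obtain ⟨μ, hμ⟩ := Module.End.exists_eigenvalue (M.mulVecLin.restrict hW)
  obtain ⟨⟨x, hxW⟩, hx⟩ := hμ.exists_hasEigenvector
  refine ⟨μ, x, fun h => hx.2 (Subtype.ext h), ?_, congrArg Subtype.val hx.apply_eq_smul⟩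
  simpa [W, Submodule.mem_pi] using hxW

/-- By the PBH test, `A + Δ` is unobservable from node `0` iff it has an eigenvector vanishing
there. -/
def unobservabilityPerturbationNorms {n : ℕ} (A : Matrix (Fin n) (Fin n) ℝ) (hn : 0 < n) :
    Set ℝ :=
  {c : ℝ | ∃ Δ : Matrix (Fin n) (Fin n) ℝ, triPattern Δ ∧ c = frobNorm Δ ∧
    ∃ (lam : ℂ) (x : Fin n → ℂ), x ≠ 0 ∧ x ⟨0, hn⟩ = 0 ∧
      ((A + Δ).map (Complex.ofReal)).mulVec x = lam • x}

section LineNetwork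

variable {n : ℕ} {A : Matrix (Fin n) (Fin n) ℝ} {b : Fin (n - 1) → ℝ}

theorem mem_unobservabilityPerturbationNorms (hn : 0 < n) (hA : triPattern A)
    (hb : ∀ i j : Fin n, (h : (j : ℕ) = i + 1) → A i j = b ⟨i, by omega⟩)
    (i : Fin (n - 1)) (hi : 0 ≤ b i) : b i ∈ unobservabilityPerturbationNorms A hn := by
  let p : Fin n := ⟨i, by omega⟩
  let q : Fin n := ⟨i + 1, by omega⟩
  refine ⟨single p q (-b i), triPattern_single rfl _, by
    rw [frobNorm_single, abs_neg, abs_of_nonneg hi], ?_⟩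
  have hblock : ∀ k ∉ {j : Fin n | (i : ℕ) < j}, ∀ j ∈ {j : Fin n | (i : ℕ) < j},
      ((A + single p q (-b i)).map Complex.ofReal) k j = 0 := by
    intro k (hk : ¬(i : ℕ) < k) j (hj : (i : ℕ) < j)
    rw [map_apply, Matrix.add_apply, Complex.ofReal_eq_zero]
    rcases (show (j : ℕ) = k + 1 ∨ (k : ℕ) + 1 < j by omega) with hkj | hkj
    · obtain rfl : k = p := Fin.ext (by simp [p]; omega)
      obtain rfl : j = q := Fin.ext (by simp [q]; omega)
      rw [hb p q rfl, single_apply_same, add_neg_cancel]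
    · rw [hA k j (.inl hkj), triPattern_single rfl _ k j (.inl hkj), add_zero]
  obtain ⟨μ, x, hx, hxs, hμ⟩ :=
    exists_mulVec_eq_smul_of_apply_eq_zero _ ⟨q, by simp [q]⟩ hblock
  exact ⟨μ, x, hx, hxs _ (by simp), hμ⟩

theorem exists_le_of_mem_unobservabilityPerturbationNorms {hn : 0 < n} (hA : triPattern A)
    (hb : ∀ i j : Fin n, (h : (j : ℕ) = i + 1) → A i j = b ⟨i, by omega⟩)
    {c : ℝ} (hc : c ∈ unobservabilityPerturbationNorms A hn) : ∃ i, b i ≤ c := by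
  obtain ⟨Δ, hΔ, rfl, μ, x, hx, hx₀, hμ⟩ := hc
  by_contra! hlt
  refine hx (eq_zero_of_mulVec_eq_smul_of_superdiag_ne_zero _ ?_ ?_ hn hx₀ hμ)
  · intro i j hij
    simp [hA i j (.inl hij), hΔ i j (.inl hij)]
  · intro i j hij
    have hΔij := abs_le.1 (abs_apply_le_frobNorm Δ i j)
    have hbi := hlt ⟨i, by omega⟩
    rw [map_apply, Ne, Complex.ofReal_eq_zero, Matrix.add_apply, hb i j hij]
    linarith [hΔij.1]

theorem isLeast_unobservabilityPerturbationNorms (hn : 1 < n) (hA : triPattern A)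
    (hb : ∀ i j : Fin n, (h : (j : ℕ) = i + 1) → A i j = b ⟨i, by omega⟩) (hb₀ : ∀ i, 0 ≤ b i) :
    IsLeast (unobservabilityPerturbationNorms A (by omega)) (⨅ i, b i) := by
  have : Nonempty (Fin (n - 1)) := ⟨⟨0, by omega⟩⟩
  obtain ⟨i, hi⟩ := exists_eq_ciInf_of_finite (f := b)
  refine ⟨hi ▸ mem_unobservabilityPerturbationNorms _ hA hb i (hb₀ i), fun c hc => ?_⟩
  obtain ⟨j, hj⟩ := exists_le_of_mem_unobservabilityPerturbationNorms hA hb hc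
  exact ciInf_le_of_le (Finite.bddBelow_range b) j hj

end LineNetwork

section UniformMinimum

variable {Ω ι : Type*} [MeasurableSpace Ω] {P : Measure Ω}

theorem ae_mem_Icc_of_map_eq_uniform {Y : Ω → ℝ} (hY : Measurable Y)
    (hunif : P.map Y = volume.restrict (Icc 0 1)) : ∀ᵐ ω ∂P, Y ω ∈ Icc (0 : ℝ) 1 :=
  (ae_map_iff hY.aemeasurable measurableSet_Icc).1 (hunif ▸ ae_restrict_mem measurableSet_Icc)

theorem measure_preimage_Ioi_of_map_eq_uniform {Y : Ω → ℝ} (hY : Measurable Y)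
    (hunif : P.map Y = volume.restrict (Icc 0 1)) {t : ℝ} (ht : 0 ≤ t) :
    P (Y ⁻¹' Ioi t) = ENNReal.ofReal (1 - t) := by
  have hIoc : Ioi t ∩ Icc 0 1 = Ioc t 1 := by
    ext u
    simp only [mem_inter_iff, mem_Ioi, mem_Icc, mem_Ioc]
    exact ⟨fun h => ⟨h.1, h.2.2⟩, fun h => ⟨h.1, ht.trans h.1.le, h.2⟩⟩
  rw [← Measure.map_apply hY measurableSet_Ioi, hunif,
    Measure.restrict_apply measurableSet_Ioi, hIoc, Real.volume_Ioc]

theorem measure_lt_iInf_of_iIndepFun_uniform [Fintype ι] [Nonempty ι] {X : ι → Ω → ℝ}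
    (hX : ∀ i, Measurable (X i)) (hindep : iIndepFun X P)
    (hunif : ∀ i, P.map (X i) = volume.restrict (Icc 0 1)) {t : ℝ} (ht : 0 ≤ t) :
    P {ω | t < ⨅ i, X i ω} = ENNReal.ofReal (1 - t) ^ Fintype.card ι := by
  have hinter : {ω | t < ⨅ i, X i ω} = ⋂ i, X i ⁻¹' Ioi t := by
    ext ω
    obtain ⟨i₀, hi₀⟩ := exists_eq_ciInf_of_finite (f := fun i => X i ω)
    simp only [mem_ofPred_eq, mem_iInter, mem_preimage, mem_Ioi, ← hi₀]
    exact ⟨fun h i => h.trans_le (hi₀ ▸ ciInf_le (Finite.bddBelow_range _) i), fun h => h i₀⟩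
  rw [hinter, hindep.meas_iInter fun i => ⟨Ioi t, measurableSet_Ioi, rfl⟩,
    Finset.prod_congr rfl fun i _ => measure_preimage_Ioi_of_map_eq_uniform (hX i) (hunif i) ht,
    Finset.prod_const, Finset.card_univ]

theorem integral_Ioi_ofReal_one_sub_pow {k : ℕ} (hk : k ≠ 0) :
    ∫ t in Ioi (0 : ℝ), (ENNReal.ofReal (1 - t) ^ k).toReal = 1 / (k + 1) := by
  rw [setIntegral_eq_of_subset_of_forall_sdiff_eq_zero measurableSet_Ioi Ioc_subset_Ioi_self
    fun t ht => ?_]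
  · rw [setIntegral_congr_fun measurableSet_Ioc (g := fun t => (1 - t) ^ k) fun t ht => ?_,
      ← intervalIntegral.integral_of_le zero_le_one,
      intervalIntegral.integral_comp_sub_left (fun s => s ^ k), integral_pow]
    · norm_num
    · simp [ENNReal.toReal_ofReal (sub_nonneg.2 ht.2)]
  · have : 1 < t := by simpa using ht
    simp [ENNReal.ofReal_eq_zero.2 (by linarith : 1 - t ≤ 0), hk]

theorem integral_iInf_of_iIndepFun_uniform [IsFiniteMeasure P] [Fintype ι] [Nonempty ι]
    {X : ι → Ω → ℝ} (hX : ∀ i, Measurable (X i)) (hindep : iIndepFun X P)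
    (hunif : ∀ i, P.map (X i) = volume.restrict (Icc 0 1)) :
    ∫ ω, ⨅ i, X i ω ∂P = 1 / (Fintype.card ι + 1) := by
  have hunit : ∀ᵐ ω ∂P, ⨅ i, X i ω ∈ Icc (0 : ℝ) 1 := by
    filter_upwards [ae_all_iff.2 fun i => ae_mem_Icc_of_map_eq_uniform (hX i) (hunif i)]
      with ω hω
    obtain ⟨i₀, hi₀⟩ := exists_eq_ciInf_of_finite (f := fun i => X i ω)
    exact hi₀ ▸ hω i₀
  have hint : Integrable (fun ω => ⨅ i, X i ω) P := by
    refine Integrable.of_bound (Measurable.iInf hX).aestronglyMeasurable 1 ?_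
    filter_upwards [hunit] with ω hω
    rw [Real.norm_eq_abs, abs_le]
    exact ⟨by linarith [hω.1], hω.2⟩
  rw [hint.integral_eq_integral_meas_lt (hunit.mono fun _ h => h.1),
    ← integral_Ioi_ofReal_one_sub_pow Fintype.card_ne_zero]
  refine setIntegral_congr_fun measurableSet_Ioi fun t ht => ?_
  rw [measureReal_def, measure_lt_iInf_of_iIndepFun_uniform hX hindep hunif (le_of_lt ht)]

end UniformMinimum

/-- For a line network with i.i.d. uniform `[0,1]` superdiagonal
weights `a₁,…,a_{n−1}`, the minimal Frobenius norm `δ(n)` of a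
tridiagonal-structured perturbation rendering the network unobservable from
node 1 equals `min{a₁,…,a_{n−1}}` (almost surely), and `𝔼[δ(n)] = 1/n`. -/
theorem line_network_radius_random {Ω : Type*} [MeasurableSpace Ω]
    (P : Measure Ω) [IsProbabilityMeasure P] (n : ℕ) (hn : 2 ≤ n)
    (a : Fin (n - 1) → Ω → ℝ) (hmeas : ∀ i, Measurable (a i))
    (hindep : iIndepFun a P)
    (hunif : ∀ i, Measure.map (a i) P = (volume : Measure ℝ).restrict (Set.Icc 0 1))
    (A : Ω → Matrix (Fin n) (Fin n) ℝ)
    (htri : ∀ ω, triPattern (A ω))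
    (hsupdiag : ∀ ω, ∀ i j : Fin n, (h : (j : ℕ) = (i : ℕ) + 1) →
      A ω i j = a ⟨(i : ℕ), by omega⟩ ω)
    (δ : Ω → ℝ) (hδ : ∀ ω, δ ω = ⨅ i, a i ω) :
    (∀ᵐ ω ∂P, IsLeast
      {c : ℝ | ∃ Δ : Matrix (Fin n) (Fin n) ℝ, triPattern Δ ∧ c = frobNorm Δ ∧
        ∃ (lam : ℂ) (x : Fin n → ℂ), x ≠ 0 ∧ x ⟨0, by omega⟩ = 0 ∧
          ((A ω + Δ).map (Complex.ofReal)).mulVec x = lam • x}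
      (δ ω)) ∧
    ∫ ω, δ ω ∂P = 1 / n := by
  have hunit : ∀ᵐ ω ∂P, ∀ i, a i ω ∈ Icc (0 : ℝ) 1 :=
    ae_all_iff.2 fun i => ae_mem_Icc_of_map_eq_uniform (hmeas i) (hunif i)
  have : Nonempty (Fin (n - 1)) := ⟨⟨0, by omega⟩⟩
  refine ⟨?_, ?_⟩
  · filter_upwards [hunit] with ω hω
    rw [hδ ω]
    exact isLeast_unobservabilityPerturbationNorms hn (htri ω) (hsupdiag ω) fun i => (hω i).1
  · rw [funext hδ, integral_iInf_of_iIndepFun_uniform hmeas hindep hunif, Fintype.card_fin,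
      Nat.cast_pred (by omega), sub_add_cancel]
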